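/- In a spatial QoS satisfaction game, suppose a dormant player n' performs a better response update by switching to channel d' ≠ 0, changing the profile from x to y. Then T_{n'}^{d'} ≥ I_{n'}^{d'}(x) + 1, and consequently Φ(y) − Φ(x) = T_{n'}^{d'} − I_{n'}^{d'}(x) − 1/2 ≥ 1/2, where Φ is the potential ∑_{n : x_n ≠ 0} T_n^{x_n} − ∑_c ( |{{n,m} ∈ E : x_n = x_m = c}| + |{n : x_n = c}|/2 ). -/
import Mathlib


open Finset

/-- Local congestion: number of players in the closed neighborhood of `n`
(including `n` itself) using channel `c`. -/
def lcong {N C : ℕ} (G : SimpleGraph (Fin N)) [DecidableRel G.Adj]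
    (x : Fin N → Option (Fin C)) (n : Fin N) (c : Fin C) : ℕ :=
  (Finset.univ.filter fun m => (m = n ∨ G.Adj n m) ∧ x m = some c).card

/-- Utility of player `n` in a spatial QoS satisfaction game. -/
def sutil {N C : ℕ} (G : SimpleGraph (Fin N)) [DecidableRel G.Adj]
    (T : Fin N → Fin C → ℤ) (x : Fin N → Option (Fin C)) (n : Fin N) : ℤ :=
  match x n with
  | none => 0
  | some c => if (lcong G x n c : ℤ) ≤ T n c then 1 else -1

/-- The potential function Φ: the sum of the thresholds which the non-dormant users
associate with their channels, minus (for each channel) the number of edges linking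
users of that channel (counted as half the number of ordered adjacent same-channel
pairs), minus half the number of users of that channel. -/
noncomputable def Phi {N C : ℕ} (G : SimpleGraph (Fin N)) [DecidableRel G.Adj]
    (T : Fin N → Fin C → ℤ) (x : Fin N → Option (Fin C)) : ℚ :=
  (∑ n : Fin N, match x n with
    | none => (0 : ℚ)
    | some c => (T n c : ℚ))
  - ∑ c : Fin C,
      ((((Finset.univ.filter fun p : Fin N × Fin N =>
            G.Adj p.1 p.2 ∧ x p.1 = some c ∧ x p.2 = some c).card : ℚ) / 2)
        + ((Finset.univ.filter fun n => x n = some c).card : ℚ) / 2)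

/-- A better response update: some player unilaterally changes strategy and strictly
increases its own utility. -/
def IsBR {N C : ℕ} (G : SimpleGraph (Fin N)) [DecidableRel G.Adj]
    (T : Fin N → Fin C → ℤ) (x y : Fin N → Option (Fin C)) : Prop :=
  ∃ (n : Fin N) (s : Option (Fin C)),
    y = Function.update x n s ∧ sutil G T x n < sutil G T y n

/-- Pure Nash equilibrium of a spatial QoS satisfaction game. -/
def IsNashS {N C : ℕ} (G : SimpleGraph (Fin N)) [DecidableRel G.Adj]
    (T : Fin N → Fin C → ℤ) (x : Fin N → Option (Fin C)) : Prop :=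
  ∀ (n : Fin N) (s : Option (Fin C)),
    sutil G T (Function.update x n s) n ≤ sutil G T x n

/-- If a dormant player `n'` performs a better response update by switching to channel
`d'`, changing the profile from `x` to `y`, then `T_{n'}^{d'} ≥ I_{n'}^{d'}(x) + 1`, and
`Φ(y) - Φ(x) = T_{n'}^{d'} - I_{n'}^{d'}(x) - 1/2 ≥ 1/2`. -/
theorem dormant_switch_potential {N C : ℕ} (G : SimpleGraph (Fin N))
    [DecidableRel G.Adj] (T : Fin N → Fin C → ℤ)
    (x y : Fin N → Option (Fin C)) (n' : Fin N) (d' : Fin C)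
    (hdorm : x n' = none) (hy : y = Function.update x n' (some d'))
    (hbetter : sutil G T x n' < sutil G T y n') :
    (lcong G x n' d' : ℤ) + 1 ≤ T n' d' ∧
      Phi G T y - Phi G T x = (T n' d' : ℚ) - (lcong G x n' d' : ℚ) - 1 / 2 ∧
      (1 : ℚ) / 2 ≤ Phi G T y - Phi G T x := by
  classical
  subst hy
  set y := Function.update x n' (some d') with hy
  -- part 1
  have hyn' : y n' = some d' := Function.update_self _ _ _
  have hfil : (Finset.univ.filter fun m => (m = n' ∨ G.Adj n' m) ∧ y m = some d')
      = insert n' (Finset.univ.filter fun m => (m = n' ∨ G.Adj n' m) ∧ x m = some d') := by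
    ext m
    by_cases hm : m = n' <;> simp [hy, hm, hdorm, Function.update_apply]
  have hlcy : lcong G y n' d' = lcong G x n' d' + 1 := by
    unfold lcong
    rw [hfil, Finset.card_insert_of_notMem (by simp [hdorm])]
  have hpart1 : (lcong G x n' d' : ℤ) + 1 ≤ T n' d' := by
    have h0 : sutil G T x n' = 0 := by unfold sutil; rw [hdorm]
    have h1 : sutil G T y n' = if (lcong G y n' d' : ℤ) ≤ T n' d' then 1 else -1 := by
      unfold sutil; rw [hyn']
    rw [h0, h1] at hbetter
    by_cases hc : (lcong G y n' d' : ℤ) ≤ T n' d'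
    · rw [hlcy] at hc; push_cast at hc; linarith
    · simp [hc] at hbetter
  -- counts
  have husers : ∀ c : Fin C, (Finset.univ.filter fun n => y n = some c).card
      = (Finset.univ.filter fun n => x n = some c).card + (if c = d' then 1 else 0) := by
    intro c
    by_cases hc : c = d'
    · subst hc
      have : (Finset.univ.filter fun n => y n = some c)
          = insert n' (Finset.univ.filter fun n => x n = some c) := by
        ext m
        by_cases hm : m = n' <;> simp [hy, hm, hdorm, Function.update_apply]
      rw [this, Finset.card_insert_of_notMem (by simp [hdorm])]
      simp
    · simp only [hc, if_false, add_zero]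
      congr 1
      apply Finset.filter_congr
      intro m _
      by_cases hm : m = n' <;>
        simp [hy, hm, hdorm, Function.update_apply, hc, Ne.symm hc]
  have hAeq : (lcong G x n' d' : ℕ) = ∑ b : Fin N, if G.Adj n' b ∧ x b = some d' then 1 else 0 := by
    unfold lcong
    rw [Finset.card_filter]
    apply Finset.sum_congr rfl
    intro b _
    by_cases hb : b = n' <;> simp [hb, hdorm]
  have hedges : ∀ c : Fin C,
      (Finset.univ.filter fun p : Fin N × Fin N =>
        G.Adj p.1 p.2 ∧ y p.1 = some c ∧ y p.2 = some c).card
      = (Finset.univ.filter fun p : Fin N × Fin N =>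
        G.Adj p.1 p.2 ∧ x p.1 = some c ∧ x p.2 = some c).card
        + (if c = d' then 2 * lcong G x n' d' else 0) := by
    intro c
    by_cases hc : c = d'
    · rw [hc]
      simp only [if_pos rfl]
      rw [Finset.card_filter, Finset.card_filter, Fintype.sum_prod_type, Fintype.sum_prod_type]
      have key : ∀ a b : Fin N,
          (if G.Adj a b ∧ y a = some d' ∧ y b = some d' then 1 else 0)
        = (if G.Adj a b ∧ x a = some d' ∧ x b = some d' then 1 else 0)
          + ((if a = n' then (if G.Adj n' b ∧ x b = some d' then 1 else 0) else 0)
          + (if b = n' then (if G.Adj a n' ∧ x a = some d' then 1 else 0) else 0)) := by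
        intro a b
        by_cases ha : a = n' <;> by_cases hb : b = n' <;>
          simp [hy, ha, hb, hdorm, Function.update_apply]
      simp only [key]
      simp only [Finset.sum_add_distrib]
      have hY : (∑ a : Fin N, ∑ b : Fin N,
          if a = n' then (if G.Adj n' b ∧ x b = some d' then 1 else 0) else 0)
          = lcong G x n' d' := by
        rw [Finset.sum_comm]
        simp only [Finset.sum_ite_eq', Finset.mem_univ, if_true]
        exact hAeq.symm
      have hZ : (∑ a : Fin N, ∑ b : Fin N,
          if b = n' then (if G.Adj a n' ∧ x a = some d' then 1 else 0) else 0)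
          = lcong G x n' d' := by
        have : ∀ a : Fin N, (∑ b : Fin N,
            if b = n' then (if G.Adj a n' ∧ x a = some d' then 1 else 0) else 0)
            = (if G.Adj n' a ∧ x a = some d' then 1 else 0) := by
          intro a
          simp only [Finset.sum_ite_eq', Finset.mem_univ, if_true]
          simp only [G.adj_comm a n']
        rw [Finset.sum_congr rfl (fun a _ => this a), ← hAeq]
      rw [hY, hZ]
      simp only [if_true]
      ring
    · simp only [hc, if_false, add_zero]
      have hdc : ¬ d' = c := fun h => hc h.symm
      have hyc : ∀ m : Fin N, (y m = some c ↔ x m = some c) := by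
        intro m
        by_cases hm : m = n' <;>
          simp [hy, hm, hdorm, Function.update_apply, hdc]
      congr 1
      apply Finset.filter_congr
      intro p _
      simp [hyc]
  -- first sum
  have hsum1 : (∑ n : Fin N, match y n with
      | none => (0 : ℚ)
      | some c => (T n c : ℚ))
      = (∑ n : Fin N, match x n with
      | none => (0 : ℚ)
      | some c => (T n c : ℚ)) + (T n' d' : ℚ) := by
    have hpt : ∀ n : Fin N, (match y n with
        | none => (0 : ℚ)
        | some c => (T n c : ℚ))
        = (match x n with
        | none => (0 : ℚ)
        | some c => (T n c : ℚ)) + (if n = n' then (T n' d' : ℚ) else 0) := by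
      intro n
      by_cases hn : n = n' <;> simp [hy, hn, hdorm, Function.update_apply]
    rw [Finset.sum_congr rfl (fun n _ => hpt n), Finset.sum_add_distrib]
    simp
  -- second sum
  have hsum2 : (∑ c : Fin C,
      ((((Finset.univ.filter fun p : Fin N × Fin N =>
            G.Adj p.1 p.2 ∧ y p.1 = some c ∧ y p.2 = some c).card : ℚ) / 2)
        + ((Finset.univ.filter fun n => y n = some c).card : ℚ) / 2))
      = (∑ c : Fin C,
      ((((Finset.univ.filter fun p : Fin N × Fin N =>
            G.Adj p.1 p.2 ∧ x p.1 = some c ∧ x p.2 = some c).card : ℚ) / 2)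
        + ((Finset.univ.filter fun n => x n = some c).card : ℚ) / 2))
        + ((lcong G x n' d' : ℚ) + 1 / 2) := by
    have hpt : ∀ c : Fin C,
        ((((Finset.univ.filter fun p : Fin N × Fin N =>
            G.Adj p.1 p.2 ∧ y p.1 = some c ∧ y p.2 = some c).card : ℚ) / 2)
        + ((Finset.univ.filter fun n => y n = some c).card : ℚ) / 2)
        = ((((Finset.univ.filter fun p : Fin N × Fin N =>
            G.Adj p.1 p.2 ∧ x p.1 = some c ∧ x p.2 = some c).card : ℚ) / 2)
        + ((Finset.univ.filter fun n => x n = some c).card : ℚ) / 2)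
        + (if c = d' then ((lcong G x n' d' : ℚ) + 1 / 2) else 0) := by
      intro c
      rw [hedges c, husers c]
      by_cases hc : c = d' <;> simp [hc] <;> push_cast <;> ring
    rw [Finset.sum_congr rfl (fun c _ => hpt c), Finset.sum_add_distrib]
    simp
  have hPhi : Phi G T y - Phi G T x
      = (T n' d' : ℚ) - (lcong G x n' d' : ℚ) - 1 / 2 := by
    unfold Phi
    rw [hsum1, hsum2]
    ring
  have hcast : (lcong G x n' d' : ℚ) + 1 ≤ ((T n' d' : ℤ) : ℚ) := by
    exact_mod_cast hpart1
  exact ⟨hpart1, hPhi, by rw [hPhi]; linarith⟩
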